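/- arXiv:2604.20008 — 6 statements merged into one kernel-verified Lean document; each statement's English description precedes it below -/
import Mathlib

section
/- Fix an integer N ≥ 1 and reals λ₁, λ₂, β with λ₂ < λ₁, β > 0 and β·(λ₁ − λ₂) > 1, and let m_E := √(1 − 1/(β(λ₁ − λ₂))). Let λ : Fin N → ℝ satisfy λ 0 = λ₁ and λ i ≤ λ₂ for all i ≠ 0. Then for every ε with 0 ≤ ε < m_E and every x ∈ EuclideanSpace ℝ (Fin N) with ‖x‖² = N and |x 0| ≤ ε·√N, one has (λ₁ − h(x)) − (1 − 1/N)·(1/β) > (λ₁ − λ₂)·(m_E² − ε²), where h(x) := (1/N)·∑ᵢ λ i · (x i)². -/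
/-!
Write `D = λ₁ - λ₂`. Since all eigenvalues but `λ₁` are at most `λ₂` and `‖x‖² = N`, the normalized
energy is at most `λ₂ + D·x₀²/N ≤ λ₂ + D·ε²`. The threshold is tuned so that `D·m_E² = D - 1/β`,
hence the drift is at least `D·(m_E² - ε²) + 1/(Nβ)`, and the strict inequality comes from the
`1/N` correction.
-/

open Real Finset

theorem Finset.sum_mul_le_of_le_of_ne {ι : Type*} [Fintype ι] [DecidableEq ι]
    (a w : ι → ℝ) (i₀ : ι) (c : ℝ) (hw : ∀ i, 0 ≤ w i) (ha : ∀ i, i ≠ i₀ → a i ≤ c) :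
    ∑ i, a i * w i ≤ c * ∑ i, w i + (a i₀ - c) * w i₀ := by
  have hrest : ∑ i ∈ univ.erase i₀, a i * w i ≤ ∑ i ∈ univ.erase i₀, c * w i :=
    sum_le_sum fun i hi => mul_le_mul_of_nonneg_right (ha i (ne_of_mem_erase hi)) (hw i)
  rw [← add_sum_erase _ _ (mem_univ i₀), ← add_sum_erase _ _ (mem_univ i₀), ← mul_sum] at *
  linarith

theorem mul_sq_sqrt_one_sub_one_div {β D : ℝ} (h : 1 ≤ β * D) :
    D * sqrt (1 - 1 / (β * D)) ^ 2 = D - 1 / β := by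
  have hβD : 0 < β * D := by linarith
  rw [sq_sqrt (sub_nonneg.mpr ((div_le_one hβD).mpr h))]
  obtain ⟨hβ, hD⟩ := mul_ne_zero_iff.mp hβD.ne'
  field_simp

theorem drift_bound_off_equator_general
    (N : ℕ) (hN : 0 < N) (lam₁ lam₂ β : ℝ)
    (hlt : lam₂ < lam₁) (hβ : 0 < β) (hβlam : 1 < β * (lam₁ - lam₂))
    (mE : ℝ) (hmE : mE = Real.sqrt (1 - 1 / (β * (lam₁ - lam₂))))
    (lam : Fin N → ℝ) (hlam0 : lam ⟨0, hN⟩ = lam₁)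
    (hlam : ∀ i : Fin N, i ≠ ⟨0, hN⟩ → lam i ≤ lam₂)
    (ε : ℝ)
    (x : EuclideanSpace ℝ (Fin N)) (hx : ‖x‖ ^ 2 = N)
    (hx0 : |x ⟨0, hN⟩| ≤ ε * Real.sqrt N) :
    (lam₁ - (1 / N) * ∑ i, lam i * (x i) ^ 2) - (1 - 1 / N) * (1 / β)
      > (lam₁ - lam₂) * (mE ^ 2 - ε ^ 2) := by
  have hNpos : (0 : ℝ) < N := Nat.cast_pos.mpr hN
  have hthreshold : (lam₁ - lam₂) * mE ^ 2 = lam₁ - lam₂ - 1 / β :=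
    hmE ▸ mul_sq_sqrt_one_sub_one_div hβlam.le
  have hoverlap : x ⟨0, hN⟩ ^ 2 ≤ ε ^ 2 * N := by
    simpa [mul_pow, sq_sqrt hNpos.le] using pow_le_pow_left₀ (abs_nonneg _) hx0 2
  have henergy : ∑ i, lam i * x i ^ 2 ≤ lam₂ * N + (lam₁ - lam₂) * (ε ^ 2 * N) := by
    have := sum_mul_le_of_le_of_ne lam (fun i => x i ^ 2) ⟨0, hN⟩ lam₂ (fun i => sq_nonneg _) hlam
    rw [← EuclideanSpace.real_norm_sq_eq, hx, hlam0] at this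
    linarith [mul_le_mul_of_nonneg_left hoverlap (sub_nonneg.mpr hlt.le)]
  have hnormalized : (1 / N) * ∑ i, lam i * x i ^ 2 ≤ lam₂ + (lam₁ - lam₂) * ε ^ 2 := by
    rw [one_div_mul_eq_div, div_le_iff₀ hNpos]
    linarith
  have hcorrection : 0 < 1 / (N : ℝ) * (1 / β) := by positivity
  linarith

/-- Drift bound off the equator (Corollary 2.2): for the spiked spherical SK Hamiltonian,
below the easy threshold `mE`, the drift coefficient of the overlap exceeds
`(λ₁ - λ₂) * (mE² - ε²)`. -/
theorem drift_bound_off_equator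
    (N : ℕ) (hN : 0 < N) (lam₁ lam₂ β : ℝ)
    (hlt : lam₂ < lam₁) (hβ : 0 < β) (hβlam : 1 < β * (lam₁ - lam₂))
    (mE : ℝ) (hmE : mE = Real.sqrt (1 - 1 / (β * (lam₁ - lam₂))))
    (lam : Fin N → ℝ) (hlam0 : lam ⟨0, hN⟩ = lam₁)
    (hlam : ∀ i : Fin N, i ≠ ⟨0, hN⟩ → lam i ≤ lam₂)
    (ε : ℝ) (hε0 : 0 ≤ ε) (hε : ε < mE)
    (x : EuclideanSpace ℝ (Fin N)) (hx : ‖x‖ ^ 2 = N)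
    (hx0 : |x ⟨0, hN⟩| ≤ ε * Real.sqrt N) :
    (lam₁ - (1 / N) * ∑ i, lam i * (x i) ^ 2) - (1 - 1 / N) * (1 / β)
      > (lam₁ - lam₂) * (mE ^ 2 - ε ^ 2) :=
  drift_bound_off_equator_general N hN lam₁ lam₂ β hlt hβ hβlam mE hmE lam hlam0 hlam ε x hx hx0
end

section
/- Let N ≥ 1 and reals λ₁, λ₂, λ_N with λ_N ≤ λ₂ ≤ λ₁. Let λ : Fin N → ℝ satisfy λ 0 = λ₁, λ i ≤ λ₂ for all i ≠ 0, and λ_N ≤ λ i for all i. Then for every x, v ∈ EuclideanSpace ℝ (Fin N) with ‖x‖² = N, ‖v‖ = 1 and ⟨v, x⟩ = 0, writing m := (x 0)/√N, one has ∑ᵢ λ i·(v i)² − (1/N)·∑ᵢ λ i·(x i)² ≤ (λ₁ − λ_N) − (2λ₁ − λ₂ − λ_N)·m². -/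
/-!
Write `a = v₀²` and `m² = x₀²/N`. Bounding the eigenvalues off the top coordinate gives
`∑ λᵢ vᵢ² ≤ λ₁ a + λ₂ (1 - a)` and `(1/N) ∑ λᵢ xᵢ² ≥ λ₁ m² + λ_N (1 - m²)`. Tangency `v ⊥ x`
forces `a + m² ≤ 1` (Bessel's inequality for the orthogonal pair `v, x/√N` against the first
basis vector), and since `λ₁ ≥ λ₂` the first bound is largest at `a = 1 - m²`.
-/

open scoped InnerProductSpace

theorem inner_sq_mul_add_inner_sq_mul_le_of_inner_eq_zero {E : Type*} [NormedAddCommGroup E]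
    [InnerProductSpace ℝ E] {v x : E} (hvx : ⟪v, x⟫_ℝ = 0) (e : E) :
    ⟪e, v⟫_ℝ ^ 2 * ‖x‖ ^ 2 + ⟪e, x⟫_ℝ ^ 2 * ‖v‖ ^ 2 ≤ ‖e‖ ^ 2 * (‖v‖ ^ 2 * ‖x‖ ^ 2) := by
  set Q := ⟪e, v⟫_ℝ ^ 2 * ‖x‖ ^ 2 + ⟪e, x⟫_ℝ ^ 2 * ‖v‖ ^ 2
  -- Cauchy–Schwarz for `e` against the projection-like vector `p` yields `Q² ≤ ‖e‖² ‖v‖² ‖x‖² Q`.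
  set p := (‖x‖ ^ 2 * ⟪e, v⟫_ℝ) • v + (‖v‖ ^ 2 * ⟪e, x⟫_ℝ) • x
  have hxv : ⟪x, v⟫_ℝ = 0 := by rw [real_inner_comm]; exact hvx
  have hep : ⟪e, p⟫_ℝ = Q := by
    simp only [p, Q, inner_add_right, real_inner_smul_right]; ring
  have hpp : ⟪p, p⟫_ℝ = ‖v‖ ^ 2 * ‖x‖ ^ 2 * Q := by
    simp only [p, Q, inner_add_left, inner_add_right, real_inner_smul_left, real_inner_smul_right,
      hvx, hxv]
    rw [real_inner_self_eq_norm_sq, real_inner_self_eq_norm_sq]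
    ring
  have hCS := real_inner_mul_inner_self_le e p
  rw [hep, hpp, real_inner_self_eq_norm_sq] at hCS
  have hQ : 0 ≤ Q := by positivity
  rcases hQ.eq_or_lt with hQ0 | hQpos
  · rw [← hQ0]; positivity
  · exact le_of_mul_le_mul_right (by linarith) hQpos

namespace EuclideanSpace

variable {ι : Type*} [Fintype ι] [DecidableEq ι]

theorem sq_apply_mul_add_sq_apply_mul_le_of_inner_eq_zero {v x : EuclideanSpace ℝ ι}
    (hvx : ⟪v, x⟫_ℝ = 0) (i : ι) :
    v i ^ 2 * ‖x‖ ^ 2 + x i ^ 2 * ‖v‖ ^ 2 ≤ ‖v‖ ^ 2 * ‖x‖ ^ 2 := by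
  simpa [EuclideanSpace.inner_single_left] using
    inner_sq_mul_add_inner_sq_mul_le_of_inner_eq_zero hvx (EuclideanSpace.single i (1 : ℝ))

theorem sum_mul_sq_le_of_le_of_ne (i₀ : ι) {lam : ι → ℝ} {c : ℝ} (h : ∀ i ≠ i₀, lam i ≤ c)
    (x : EuclideanSpace ℝ ι) :
    ∑ i, lam i * x i ^ 2 ≤ lam i₀ * x i₀ ^ 2 + c * (‖x‖ ^ 2 - x i₀ ^ 2) := by
  have hsplit (f : ι → ℝ) : ∑ i, f i = f i₀ + ∑ i ∈ Finset.univ.erase i₀, f i :=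
    (Finset.add_sum_erase _ _ (Finset.mem_univ i₀)).symm
  rw [real_norm_sq_eq, hsplit, hsplit (x · ^ 2), add_sub_cancel_left, Finset.mul_sum]
  gcongr with i hi
  exact h i (Finset.ne_of_mem_erase hi)

theorem add_mul_le_sum_mul_sq_of_le_of_ne (i₀ : ι) {lam : ι → ℝ} {c : ℝ}
    (h : ∀ i ≠ i₀, c ≤ lam i) (x : EuclideanSpace ℝ ι) :
    lam i₀ * x i₀ ^ 2 + c * (‖x‖ ^ 2 - x i₀ ^ 2) ≤ ∑ i, lam i * x i ^ 2 := by
  have := sum_mul_sq_le_of_le_of_ne i₀ (lam := (- lam ·)) (c := -c)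
    (fun i hi ↦ neg_le_neg (h i hi)) x
  simp only [neg_mul, Finset.sum_neg_distrib] at this
  linarith

end EuclideanSpace

theorem spherical_hessian_bound_general
    (N : ℕ) (hN : 0 < N) (lam₁ lam₂ lamN : ℝ)
    (h2 : lam₂ ≤ lam₁)
    (lam : Fin N → ℝ) (hlam0 : lam ⟨0, hN⟩ = lam₁)
    (hlam2 : ∀ i : Fin N, i ≠ ⟨0, hN⟩ → lam i ≤ lam₂)
    (hlamN : ∀ i : Fin N, lamN ≤ lam i)
    (x v : EuclideanSpace ℝ (Fin N))
    (hx : ‖x‖ ^ 2 = N) (hv : ‖v‖ = 1) (hvx : ⟪v, x⟫_ℝ = 0) :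
    ∑ i, lam i * (v i) ^ 2 - (1 / N) * ∑ i, lam i * (x i) ^ 2
      ≤ (lam₁ - lamN) - (2 * lam₁ - lam₂ - lamN) * ((x ⟨0, hN⟩) / Real.sqrt N) ^ 2 := by
  set i₀ : Fin N := ⟨0, hN⟩
  have hNpos : (0 : ℝ) < N := by exact_mod_cast hN
  set m := x i₀ / Real.sqrt N
  have hx₀ : x i₀ ^ 2 = N * m ^ 2 := by
    rw [div_pow, Real.sq_sqrt hNpos.le, mul_div_cancel₀ _ hNpos.ne']
  have hv_sum := EuclideanSpace.sum_mul_sq_le_of_le_of_ne i₀ hlam2 v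
  have hx_sum := EuclideanSpace.add_mul_le_sum_mul_sq_of_le_of_ne i₀ (fun i _ ↦ hlamN i) x
  have htangent := EuclideanSpace.sq_apply_mul_add_sq_apply_mul_le_of_inner_eq_zero hvx i₀
  rw [hv, hlam0] at hv_sum
  rw [hx, hlam0, hx₀] at hx_sum
  rw [hv, hx, hx₀] at htangent
  have hv₀ : v i₀ ^ 2 ≤ 1 - m ^ 2 := by nlinarith
  have hx_avg : lam₁ * m ^ 2 + lamN * (1 - m ^ 2) ≤ 1 / N * ∑ i, lam i * x i ^ 2 := by
    rw [one_div_mul_eq_div, le_div_iff₀ hNpos]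
    linarith
  linarith [mul_le_mul_of_nonneg_left hv₀ (sub_nonneg.mpr h2)]

/-- Local Bakry–Émery estimate (Lemma 3.9): the spherical Hessian of the Hamiltonian
`H(x) = (1/2) ∑ λᵢ xᵢ²` in a unit tangent direction `v` satisfies
`∑ λᵢ vᵢ² - (1/N) ∑ λᵢ xᵢ² ≤ (λ₁ - λ_N) - (2λ₁ - λ₂ - λ_N) m²` with `m = x₀/√N`. -/
theorem spherical_hessian_bound
    (N : ℕ) (hN : 0 < N) (lam₁ lam₂ lamN : ℝ)
    (h1 : lamN ≤ lam₂) (h2 : lam₂ ≤ lam₁)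
    (lam : Fin N → ℝ) (hlam0 : lam ⟨0, hN⟩ = lam₁)
    (hlam2 : ∀ i : Fin N, i ≠ ⟨0, hN⟩ → lam i ≤ lam₂)
    (hlamN : ∀ i : Fin N, lamN ≤ lam i)
    (x v : EuclideanSpace ℝ (Fin N))
    (hx : ‖x‖ ^ 2 = N) (hv : ‖v‖ = 1) (hvx : ⟪v, x⟫_ℝ = 0) :
    ∑ i, lam i * (v i) ^ 2 - (1 / N) * ∑ i, lam i * (x i) ^ 2
      ≤ (lam₁ - lamN) - (2 * lam₁ - lam₂ - lamN) * ((x ⟨0, hN⟩) / Real.sqrt N) ^ 2 :=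
  spherical_hessian_bound_general N hN lam₁ lam₂ lamN h2 lam hlam0 hlam2 hlamN x v hx hv hvx
end

section
/- Let n > 0 be a real number, let T > 2 and R > 0, and set σ² := (e^{2T} − 1)/(2n). Then the Gaussian probability measure on ℝ with mean 0 and variance σ² assigns to the interval [−R, R] mass at most (3·R·√(2n)/√(2π))·e^{−T}. -/
/-!
The Gaussian density never exceeds its peak value `1/√(2πσ²)`, so `[-R, R]` has mass at most
`2R/√(2πσ²)`. Since `e^{2T} ≥ 9/5`, we have `e^{2T} - 1 ≥ (4/9) e^{2T}`, i.e. `σ ≥ (2/3) e^T/√(2n)`.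
-/

open MeasureTheory ProbabilityTheory NNReal

namespace ProbabilityTheory

lemma gaussianPDFReal_le_inv_sqrt (μ : ℝ) (v : ℝ≥0) (x : ℝ) :
    gaussianPDFReal μ v x ≤ (Real.sqrt (2 * Real.pi * v))⁻¹ := by
  rw [gaussianPDFReal]
  refine mul_le_of_le_one_right (by positivity) (Real.exp_le_one_iff.mpr ?_)
  exact div_nonpos_of_nonpos_of_nonneg (neg_nonpos.mpr (sq_nonneg _)) (by positivity)

lemma gaussianReal_le_mul_volume (μ : ℝ) {v : ℝ≥0} (hv : v ≠ 0) (s : Set ℝ) :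
    gaussianReal μ v s ≤ ENNReal.ofReal (Real.sqrt (2 * Real.pi * v))⁻¹ * volume s := by
  rw [gaussianReal_apply μ hv, ← setLIntegral_const]
  exact lintegral_mono fun x ↦ ENNReal.ofReal_le_ofReal (gaussianPDFReal_le_inv_sqrt μ v x)

lemma gaussianReal_Icc_le (μ : ℝ) {v : ℝ≥0} (hv : v ≠ 0) (a b : ℝ) :
    gaussianReal μ v (Set.Icc a b) ≤ ENNReal.ofReal ((b - a) / Real.sqrt (2 * Real.pi * v)) := by
  calc gaussianReal μ v (Set.Icc a b)
      ≤ ENNReal.ofReal (Real.sqrt (2 * Real.pi * v))⁻¹ * ENNReal.ofReal (b - a) := by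
        simpa only [Real.volume_Icc] using gaussianReal_le_mul_volume μ hv (Set.Icc a b)
    _ = ENNReal.ofReal ((b - a) / Real.sqrt (2 * Real.pi * v)) := by
        rw [← ENNReal.ofReal_mul (by positivity), inv_mul_eq_div]

end ProbabilityTheory

lemma Real.two_thirds_mul_exp_le_sqrt_exp_two_mul_sub_one {T : ℝ} (hT : 1 / 2 ≤ T) :
    2 / 3 * Real.exp T ≤ Real.sqrt (Real.exp (2 * T) - 1) := by
  have h2T : 2 ≤ Real.exp (2 * T) := by linarith [Real.add_one_le_exp (2 * T)]
  rw [Real.le_sqrt (by positivity) (by linarith), mul_pow, ← Real.exp_nat_mul]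
  push_cast
  linarith

/-- Gaussian small-ball estimate from Lemma 3.4: the centered Gaussian of variance
`(e^{2T} - 1)/(2n)` assigns to `[-R, R]` mass at most `(3 R √(2n)/√(2π)) e^{-T}`. -/
theorem gaussian_small_ball
    (n T R : ℝ) (hn : 0 < n) (hT : 2 < T) (hR : 0 < R) :
    gaussianReal 0 (((Real.exp (2 * T) - 1) / (2 * n)).toNNReal) (Set.Icc (-R) R)
      ≤ ENNReal.ofReal (3 * R * Real.sqrt (2 * n) / Real.sqrt (2 * Real.pi) * Real.exp (-T)) := by
  have hexp : 1 < Real.exp (2 * T) := Real.one_lt_exp_iff.mpr (by linarith)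
  have hvar : 0 < (Real.exp (2 * T) - 1) / (2 * n) := div_pos (by linarith) (by linarith)
  refine (gaussianReal_Icc_le 0 (by simpa using hvar) _ _).trans (ENNReal.ofReal_le_ofReal ?_)
  have hsqrt := Real.two_thirds_mul_exp_le_sqrt_exp_two_mul_sub_one (T := T) (by linarith)
  have h2n : 0 < Real.sqrt (2 * n) := Real.sqrt_pos.mpr (by linarith)
  rw [Real.coe_toNNReal _ hvar.le]
  calc (R - -R) / Real.sqrt (2 * Real.pi * ((Real.exp (2 * T) - 1) / (2 * n)))
      = 2 * R * Real.sqrt (2 * n) / (Real.sqrt (2 * Real.pi) * Real.sqrt (Real.exp (2 * T) - 1)) := by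
        rw [Real.sqrt_mul (by positivity), Real.sqrt_div (by linarith)]
        field_simp
        ring
    _ ≤ 2 * R * Real.sqrt (2 * n) / (Real.sqrt (2 * Real.pi) * (2 / 3 * Real.exp T)) := by
        gcongr
    _ = 3 * R * Real.sqrt (2 * n) / Real.sqrt (2 * Real.pi) * Real.exp (-T) := by
        rw [Real.exp_neg]
        field_simp
end

section
/- Let S be a standard Borel space, T : S → S a measurable involution, and K, K' Markov kernels from S to S which both commute with T, meaning Measure.map T (μ.bind K) = (Measure.map T μ).bind K for every probability measure μ (and similarly for K'). For probability measures write d_TV(μ, ν) := sup over measurable sets A of |μ(A) − ν(A)| and μK := μ.bind K. Let M_E be the set of T-invariant probability measures on S, and define d̄(K) := sup_{μ, ν ∈ M_E} d_TV(μK, νK), d̄(K') likewise, and d̄(K∘K') := sup_{μ, ν ∈ M_E} d_TV((μK)K', (νK)K'). Then d̄(K∘K') ≤ d̄(K)·d̄(K'). -/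
/-!
Split two `T`-invariant laws `α, β` along a Hahn set of `α - β` into a common part plus parts
of equal mass `m ≤ d_TV(α, β)`, and average each part with its image under `T`. Since `α` and
`β` are `T`-invariant this gives `α = ρ + m p`, `β = ρ + m q` with `p, q` again `T`-invariant
probability measures, so `d_TV(αK', βK') = m · d_TV(pK', qK') ≤ d_TV(α, β) · d̄(K')`.
Applied to `α = μK`, `β = νK`, which are `T`-invariant because `K` commutes with `T`, this is
the claim.
-/

open MeasureTheory ProbabilityTheory

/-- Total-variation distance between two measures, as a supremum over measurable sets. -/
noncomputable def dTV {S : Type*} [MeasurableSpace S] (μ ν : Measure S) : ℝ :=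
  ⨆ A : {A : Set S // MeasurableSet A}, |(μ A.1).toReal - (ν A.1).toReal|

open Set
open scoped ENNReal

section TotalVariation

variable {S : Type*} [MeasurableSpace S]

lemma dTV_nonneg (μ ν : Measure S) : 0 ≤ dTV μ ν :=
  Real.iSup_nonneg fun _ => abs_nonneg _

lemma abs_sub_le_dTV (μ ν : Measure S) [IsFiniteMeasure μ] [IsFiniteMeasure ν]
    {A : Set S} (hA : MeasurableSet A) : |(μ A).toReal - (ν A).toReal| ≤ dTV μ ν := by
  refine le_ciSup
    (f := fun B : {A : Set S // MeasurableSet A} => |(μ B.1).toReal - (ν B.1).toReal|)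
    ⟨(μ univ).toReal + (ν univ).toReal, ?_⟩ ⟨A, hA⟩
  rintro _ ⟨B, rfl⟩
  exact abs_sub_le_of_nonneg_of_le ENNReal.toReal_nonneg
    (le_add_of_le_of_nonneg (measureReal_mono (subset_univ _)) ENNReal.toReal_nonneg)
    ENNReal.toReal_nonneg
    (le_add_of_nonneg_of_le ENNReal.toReal_nonneg (measureReal_mono (subset_univ _)))

lemma dTV_le_one (μ ν : Measure S) [IsProbabilityMeasure μ] [IsProbabilityMeasure ν] :
    dTV μ ν ≤ 1 :=
  Real.iSup_le (fun _ => abs_sub_le_of_nonneg_of_le ENNReal.toReal_nonneg measureReal_le_one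
    ENNReal.toReal_nonneg measureReal_le_one) zero_le_one

lemma dTV_add_smul_add_smul (ρ μ ν : Measure S) [IsFiniteMeasure ρ] [IsFiniteMeasure μ]
    [IsFiniteMeasure ν] {m : ℝ≥0∞} (hm : m ≠ ∞) :
    dTV (ρ + m • μ) (ρ + m • ν) = m.toReal * dTV μ ν := by
  rw [dTV, dTV, Real.mul_iSup_of_nonneg ENNReal.toReal_nonneg]
  congr 1 with A
  simp only [Measure.add_apply, Measure.smul_apply, smul_eq_mul]
  rw [ENNReal.toReal_add (measure_ne_top _ _) (ENNReal.mul_ne_top hm (measure_ne_top _ _)),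
    ENNReal.toReal_add (measure_ne_top _ _) (ENNReal.mul_ne_top hm (measure_ne_top _ _)),
    ENNReal.toReal_mul, ENNReal.toReal_mul, add_sub_add_left_eq_sub, ← mul_sub, abs_mul,
    ENNReal.abs_toReal]

end TotalVariation

section Decomposition

variable {S : Type*} [MeasurableSpace S]

lemma exists_eq_add_eq_add_of_measure_univ_eq (α β : Measure S) [IsFiniteMeasure α]
    [IsFiniteMeasure β] (h : α univ = β univ) :
    ∃ ρ A B : Measure S, α = ρ + A ∧ β = ρ + B ∧ A univ = B univ ∧
      (A univ).toReal ≤ dTV α β := by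
  obtain ⟨E, hE, hβα, hαβ⟩ := hahn_decomposition α β
  have hle : β.restrict E ≤ α.restrict E := Measure.le_iff.2 fun s hs => by
    rw [Measure.restrict_apply hs, Measure.restrict_apply hs]
    exact hβα _ (hs.inter hE) inter_subset_right
  have hle' : α.restrict Eᶜ ≤ β.restrict Eᶜ := Measure.le_iff.2 fun s hs => by
    rw [Measure.restrict_apply hs, Measure.restrict_apply hs]
    exact hαβ _ (hs.inter hE.compl) inter_subset_right
  have hα : α = (α.restrict Eᶜ + β.restrict E) + (α.restrict E - β.restrict E) := by
    rw [add_assoc, add_comm (β.restrict E), Measure.sub_add_cancel_of_le hle, add_comm,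
      Measure.restrict_add_restrict_compl hE]
  have hβ : β = (α.restrict Eᶜ + β.restrict E) + (β.restrict Eᶜ - α.restrict Eᶜ) := by
    rw [add_comm (α.restrict Eᶜ), add_assoc, add_comm (α.restrict Eᶜ),
      Measure.sub_add_cancel_of_le hle', Measure.restrict_add_restrict_compl hE]
  refine ⟨_, _, _, hα, hβ, ?_, ?_⟩
  · refine (ENNReal.add_right_inj (measure_ne_top (α.restrict Eᶜ + β.restrict E) univ)).1 ?_
    rwa [← Measure.add_apply, ← Measure.add_apply, ← hα, ← hβ]
  · rw [Measure.sub_apply MeasurableSet.univ hle, Measure.restrict_apply_univ,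
      Measure.restrict_apply_univ,
      ENNReal.toReal_sub_of_le (hβα E hE subset_rfl) (measure_ne_top α E)]
    exact (le_abs_self _).trans (abs_sub_le_dTV α β hE)

noncomputable def symmetrize (T : S → S) (μ : Measure S) : Measure S :=
  (2 : ℝ≥0∞)⁻¹ • (μ + μ.map T)

variable {T : S → S}

lemma symmetrize_add (hT : Measurable T) (μ ν : Measure S) :
    symmetrize T (μ + ν) = symmetrize T μ + symmetrize T ν := by
  rw [symmetrize, symmetrize, symmetrize, ← smul_add, Measure.map_add _ _ hT, add_add_add_comm]

lemma symmetrize_of_map_eq {μ : Measure S} (h : μ.map T = μ) : symmetrize T μ = μ := by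
  rw [symmetrize, h, ← two_smul ℝ≥0∞, smul_smul,
    ENNReal.inv_mul_cancel two_ne_zero ENNReal.ofNat_ne_top, one_smul]

lemma map_symmetrize (hT : Measurable T) (hTT : Function.Involutive T) (μ : Measure S) :
    (symmetrize T μ).map T = symmetrize T μ := by
  rw [symmetrize, Measure.map_smul, Measure.map_add _ _ hT, Measure.map_map hT hT,
    hTT.comp_self, Measure.map_id, add_comm]

lemma symmetrize_apply_univ (hT : Measurable T) (μ : Measure S) :
    symmetrize T μ univ = μ univ := by
  rw [symmetrize, Measure.smul_apply, Measure.add_apply, Measure.map_apply hT MeasurableSet.univ,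
    preimage_univ, smul_eq_mul, ← two_mul, ← mul_assoc,
    ENNReal.inv_mul_cancel two_ne_zero ENNReal.ofNat_ne_top, one_mul]

lemma isFiniteMeasure_symmetrize (hT : Measurable T) (μ : Measure S) [IsFiniteMeasure μ] :
    IsFiniteMeasure (symmetrize T μ) :=
  ⟨by rw [symmetrize_apply_univ hT]; exact measure_lt_top μ univ⟩

lemma exists_eq_smul_of_map_eq {A : Measure S} [IsFiniteMeasure A] (hA : A.map T = A)
    (ν : Measure S) [IsProbabilityMeasure ν] (hν : ν.map T = ν) :
    ∃ p : Measure S, IsProbabilityMeasure p ∧ p.map T = p ∧ A = A univ • p := by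
  rcases eq_zero_or_neZero A with rfl | _
  · exact ⟨ν, inferInstance, hν, by simp⟩
  · refine ⟨(A univ)⁻¹ • A, inferInstance, by rw [Measure.map_smul, hA], ?_⟩
    rw [smul_smul, ENNReal.mul_inv_cancel (NeZero.ne _) (measure_ne_top _ _), one_smul]

lemma exists_symmetric_decomposition (hT : Measurable T) (hTT : Function.Involutive T)
    (α β : Measure S) [IsProbabilityMeasure α] [IsProbabilityMeasure β]
    (hα : α.map T = α) (hβ : β.map T = β) :
    ∃ (ρ : Measure S) (m : ℝ≥0∞) (p q : Measure S), IsFiniteMeasure ρ ∧ m ≠ ∞ ∧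
      IsProbabilityMeasure p ∧ p.map T = p ∧ IsProbabilityMeasure q ∧ q.map T = q ∧
      α = ρ + m • p ∧ β = ρ + m • q ∧ m.toReal ≤ dTV α β := by
  obtain ⟨ρ, A, B, hαρ, hβρ, hAB, hAdTV⟩ :=
    exists_eq_add_eq_add_of_measure_univ_eq α β (by simp)
  have : IsFiniteMeasure ρ := isFiniteMeasure_of_le α (hαρ ▸ Measure.le_add_right le_rfl)
  have : IsFiniteMeasure A := isFiniteMeasure_of_le α (hαρ ▸ Measure.le_add_left le_rfl)
  have : IsFiniteMeasure B := isFiniteMeasure_of_le β (hβρ ▸ Measure.le_add_left le_rfl)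
  have := isFiniteMeasure_symmetrize hT A
  have := isFiniteMeasure_symmetrize hT B
  obtain ⟨p, hp, hpT, hAp⟩ := exists_eq_smul_of_map_eq (map_symmetrize hT hTT A) α hα
  obtain ⟨q, hq, hqT, hBq⟩ := exists_eq_smul_of_map_eq (map_symmetrize hT hTT B) α hα
  rw [symmetrize_apply_univ hT] at hAp hBq
  refine ⟨symmetrize T ρ, A univ, p, q, isFiniteMeasure_symmetrize hT ρ, measure_ne_top A univ,
    hp, hpT, hq, hqT, ?_, ?_, hAdTV⟩
  · conv_lhs => rw [← symmetrize_of_map_eq hα, hαρ, symmetrize_add hT, hAp]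
  · conv_lhs => rw [← symmetrize_of_map_eq hβ, hβρ, symmetrize_add hT, hBq, ← hAB]

end Decomposition

section Kernel

variable {S S' : Type*} [MeasurableSpace S] [MeasurableSpace S'] {T : S → S}

variable (T) in
abbrev InvariantProbabilityMeasure : Type _ :=
  {μ : Measure S // IsProbabilityMeasure μ ∧ μ.map T = μ}

variable (T) in
noncomputable def dbar (κ : Kernel S S') : ℝ :=
  ⨆ p : InvariantProbabilityMeasure T × InvariantProbabilityMeasure T,
    dTV (κ ∘ₘ p.1.1) (κ ∘ₘ p.2.1)

lemma dbar_nonneg (κ : Kernel S S') : 0 ≤ dbar T κ :=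
  Real.iSup_nonneg fun _ => dTV_nonneg _ _

lemma dTV_comp_le_dbar (κ : Kernel S S') [IsMarkovKernel κ]
    (μ ν : InvariantProbabilityMeasure T) :
    dTV (κ ∘ₘ μ.1) (κ ∘ₘ ν.1) ≤ dbar T κ := by
  refine le_ciSup (f := fun p : InvariantProbabilityMeasure T × InvariantProbabilityMeasure T =>
    dTV (κ ∘ₘ p.1.1) (κ ∘ₘ p.2.1)) ⟨1, ?_⟩ (μ, ν)
  rintro _ ⟨⟨⟨_, _, _⟩, ⟨_, _, _⟩⟩, rfl⟩
  exact dTV_le_one _ _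

theorem dTV_comp_le_mul_dbar (hT : Measurable T) (hTT : Function.Involutive T)
    (κ : Kernel S S') [IsMarkovKernel κ] (α β : Measure S) [IsProbabilityMeasure α]
    [IsProbabilityMeasure β] (hα : α.map T = α) (hβ : β.map T = β) :
    dTV (κ ∘ₘ α) (κ ∘ₘ β) ≤ dTV α β * dbar T κ := by
  obtain ⟨ρ, m, p, q, hρ, hm, hp, hpT, hq, hqT, rfl, rfl, hm_le⟩ :=
    exists_symmetric_decomposition hT hTT α β hα hβ
  rw [Measure.comp_add, Measure.comp_add, Measure.comp_smul, Measure.comp_smul,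
    dTV_add_smul_add_smul _ _ _ hm]
  exact mul_le_mul hm_le (dTV_comp_le_dbar κ ⟨p, hp, hpT⟩ ⟨q, hq, hqT⟩) (dTV_nonneg _ _)
    (dTV_nonneg _ _)

theorem dbar_comp_le (hT : Measurable T) (hTT : Function.Involutive T)
    (η : Kernel S S) [IsMarkovKernel η] (κ : Kernel S S') [IsMarkovKernel κ]
    (hη : ∀ μ : Measure S, IsProbabilityMeasure μ → (η ∘ₘ μ).map T = η ∘ₘ μ.map T) :
    dbar T (κ ∘ₖ η) ≤ dbar T η * dbar T κ := by
  refine Real.iSup_le (fun ⟨⟨μ, hμ, hμT⟩, ⟨ν, hν, hνT⟩⟩ => ?_)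
    (mul_nonneg (dbar_nonneg η) (dbar_nonneg κ))
  rw [← Measure.comp_assoc, ← Measure.comp_assoc]
  calc dTV (κ ∘ₘ (η ∘ₘ μ)) (κ ∘ₘ (η ∘ₘ ν)) ≤ dTV (η ∘ₘ μ) (η ∘ₘ ν) * dbar T κ :=
        dTV_comp_le_mul_dbar hT hTT κ _ _ (by rw [hη μ hμ, hμT]) (by rw [hη ν hν, hνT])
    _ ≤ dbar T η * dbar T κ :=
        mul_le_mul_of_nonneg_right (dTV_comp_le_dbar η ⟨μ, hμ, hμT⟩ ⟨ν, hν, hνT⟩)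
          (dbar_nonneg κ)

end Kernel

theorem dbar_submultiplicative_general
    {S : Type*} [MeasurableSpace S]
    (T : S → S) (hT : Measurable T) (hTT : T ∘ T = id)
    (K K' : Kernel S S) [IsMarkovKernel K] [IsMarkovKernel K']
    (hK : ∀ μ : Measure S, IsProbabilityMeasure μ →
      (μ.bind (fun s => K s)).map T = (μ.map T).bind (fun s => K s))
    (dK dK' dKK' : ℝ)
    (hdK : dK = ⨆ p : {μ : Measure S // IsProbabilityMeasure μ ∧ μ.map T = μ} ×
          {μ : Measure S // IsProbabilityMeasure μ ∧ μ.map T = μ},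
        dTV (p.1.1.bind (fun s => K s)) (p.2.1.bind (fun s => K s)))
    (hdK' : dK' = ⨆ p : {μ : Measure S // IsProbabilityMeasure μ ∧ μ.map T = μ} ×
          {μ : Measure S // IsProbabilityMeasure μ ∧ μ.map T = μ},
        dTV (p.1.1.bind (fun s => K' s)) (p.2.1.bind (fun s => K' s)))
    (hdKK' : dKK' = ⨆ p : {μ : Measure S // IsProbabilityMeasure μ ∧ μ.map T = μ} ×
          {μ : Measure S // IsProbabilityMeasure μ ∧ μ.map T = μ},
        dTV ((p.1.1.bind (fun s => K s)).bind (fun s => K' s))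
            ((p.2.1.bind (fun s => K s)).bind (fun s => K' s))) :
    dKK' ≤ dK * dK' := by
  have hdKK'_eq : dKK' = dbar T (K' ∘ₖ K) := by
    simp only [hdKK', dbar, Measure.comp_assoc]
  rw [hdKK'_eq, hdK, hdK']
  exact dbar_comp_le hT (congrFun hTT) K K' hK

/-- Abstract submultiplicativity of Lemma B.2: for Markov kernels `K, K'` commuting with a
measurable involution `T` on a standard Borel space, the worst-case symmetric TV distances
satisfy `d̄(K∘K') ≤ d̄(K) · d̄(K')`, the suprema being over `T`-invariant probability
measures. -/
theorem dbar_submultiplicative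
    {S : Type*} [MeasurableSpace S] [StandardBorelSpace S]
    (T : S → S) (hT : Measurable T) (hTT : T ∘ T = id)
    (K K' : Kernel S S) [IsMarkovKernel K] [IsMarkovKernel K']
    (hK : ∀ μ : Measure S, IsProbabilityMeasure μ →
      (μ.bind (fun s => K s)).map T = (μ.map T).bind (fun s => K s))
    (hK' : ∀ μ : Measure S, IsProbabilityMeasure μ →
      (μ.bind (fun s => K' s)).map T = (μ.map T).bind (fun s => K' s))
    (dK dK' dKK' : ℝ)
    (hdK : dK = ⨆ p : {μ : Measure S // IsProbabilityMeasure μ ∧ μ.map T = μ} ×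
          {μ : Measure S // IsProbabilityMeasure μ ∧ μ.map T = μ},
        dTV (p.1.1.bind (fun s => K s)) (p.2.1.bind (fun s => K s)))
    (hdK' : dK' = ⨆ p : {μ : Measure S // IsProbabilityMeasure μ ∧ μ.map T = μ} ×
          {μ : Measure S // IsProbabilityMeasure μ ∧ μ.map T = μ},
        dTV (p.1.1.bind (fun s => K' s)) (p.2.1.bind (fun s => K' s)))
    (hdKK' : dKK' = ⨆ p : {μ : Measure S // IsProbabilityMeasure μ ∧ μ.map T = μ} ×
          {μ : Measure S // IsProbabilityMeasure μ ∧ μ.map T = μ},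
        dTV ((p.1.1.bind (fun s => K s)).bind (fun s => K' s))
            ((p.2.1.bind (fun s => K s)).bind (fun s => K' s))) :
    dKK' ≤ dK * dK' :=
  dbar_submultiplicative_general T hT hTT K K' hK dK dK' dKK' hdK hdK' hdKK'
end

section
/- If α > 1 and θ > max{1 + 24/(α − 1), 4}, then α·(θ−1)⁴ > θ²·(θ+1)². -/
/-- Explicit threshold bound of Lemma D.1: if `α > 1` and `θ > max{1 + 24/(α-1), 4}`,
then `α(θ-1)⁴ > θ²(θ+1)²`. -/
theorem theta_threshold_bound
    (α θ : ℝ) (hα : 1 < α) (hθ : max (1 + 24 / (α - 1)) 4 < θ) :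
    α * (θ - 1) ^ 4 > θ ^ 2 * (θ + 1) ^ 2 := by
  have h4 : (4:ℝ) < θ := lt_of_le_of_lt (le_max_right _ _) hθ
  have h1 : 1 + 24 / (α - 1) < θ := lt_of_le_of_lt (le_max_left _ _) hθ
  have hα1 : 0 < α - 1 := by linarith
  have hkey : 24 < (α - 1) * (θ - 1) := by
    have := (div_lt_iff₀ hα1).mp (by linarith : 24 / (α - 1) < θ - 1)
    linarith [this]
  nlinarith [sq_nonneg (θ - 1), sq_nonneg θ, mul_pos hα1 (by linarith : (0:ℝ) < θ - 1),
    mul_lt_mul_of_pos_right hkey (pow_pos (by linarith : (0:ℝ) < θ - 1) 3)]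
end

section
/- Let A, B, p > 0 and let y : ℝ → ℝ be differentiable on [0,∞) with y(t) > 0 and deriv y t ≤ A·y(t) − B·y(t)^{1+p} for all t ≥ 0. Then for every t > 0, y(t) ≤ e^{A t}·(p·B·t)^{−1/p}. -/
/-!
The Bernoulli substitution `z = y^{-p}` linearises the inequality: `z' ≥ -pA z + pB`. With the
integrating factor `e^{pAs}`, the function `y(s)^{-p} e^{pAs}` has derivative at least
`pB e^{pAs} ≥ pB`, so by the mean value theorem it exceeds `pBt` at time `t` (its value at `0`
being positive). Raising `pBt ≤ (y(t) e^{-At})^{-p}` to the power `-1/p` gives the bound.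
-/

open Real Set

noncomputable def bernoulliTransform (A p : ℝ) (y : ℝ → ℝ) (s : ℝ) : ℝ :=
  y s ^ (-p) * exp (p * A * s)

lemma mul_le_neg_mul_rpow_mul_add {A B p Y y' : ℝ} (hp : 0 ≤ p) (hY : 0 < Y)
    (h : y' ≤ A * Y - B * Y ^ (1 + p)) :
    p * B ≤ -p * Y ^ (-p - 1) * y' + p * A * Y ^ (-p) := by
  have hcancel : Y ^ (-p - 1) * Y ^ (1 + p) = 1 := by
    rw [← rpow_add hY, show -p - 1 + (1 + p) = 0 by ring, rpow_zero]
  have hshift : Y ^ (-p) = Y ^ (-p - 1) * Y := by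
    rw [← rpow_add_one hY.ne', sub_add_cancel]
  have hB : B * Y ^ (1 + p) ≤ A * Y - y' := by linarith
  calc p * B = p * Y ^ (-p - 1) * (B * Y ^ (1 + p)) := by linear_combination (-(p * B)) * hcancel
    _ ≤ p * Y ^ (-p - 1) * (A * Y - y') := by gcongr
    _ = -p * Y ^ (-p - 1) * y' + p * A * Y ^ (-p) := by rw [hshift]; ring

lemma hasDerivAt_bernoulliTransform {A p y' s : ℝ} {y : ℝ → ℝ} (hy : HasDerivAt y y' s)
    (hpos : 0 < y s) :
    HasDerivAt (bernoulliTransform A p y)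
      ((-p * y s ^ (-p - 1) * y' + p * A * y s ^ (-p)) * exp (p * A * s)) s := by
  have hexp : HasDerivAt (fun u => exp (p * A * u)) (exp (p * A * s) * (p * A)) s := by
    simpa using ((hasDerivAt_id s).const_mul (p * A)).exp
  exact ((hy.rpow_const (p := -p) (Or.inl hpos.ne')).mul hexp).congr_deriv (by ring)

lemma mul_exp_le_deriv_bernoulliTransform {A B p s : ℝ} {y : ℝ → ℝ} (hp : 0 ≤ p)
    (hy : DifferentiableAt ℝ y s) (hpos : 0 < y s)
    (hode : deriv y s ≤ A * y s - B * y s ^ (1 + p)) :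
    p * B * exp (p * A * s) ≤ deriv (bernoulliTransform A p y) s := by
  rw [(hasDerivAt_bernoulliTransform hy.hasDerivAt hpos).deriv]
  exact mul_le_mul_of_nonneg_right (mul_le_neg_mul_rpow_mul_add hp hpos hode) (exp_pos _).le

lemma mul_le_bernoulliTransform_sub {A B p t : ℝ} {y : ℝ → ℝ} (hA : 0 ≤ A) (hB : 0 ≤ B)
    (hp : 0 ≤ p) (hy : ∀ s ∈ Ici (0 : ℝ), DifferentiableAt ℝ y s)
    (hpos : ∀ s ∈ Ici (0 : ℝ), 0 < y s)
    (hode : ∀ s ∈ Ici (0 : ℝ), deriv y s ≤ A * y s - B * y s ^ (1 + p)) (ht : 0 ≤ t) :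
    p * B * t ≤ bernoulliTransform A p y t - bernoulliTransform A p y 0 := by
  have hderiv (s : ℝ) (hs : s ∈ Ici (0 : ℝ)) :=
    hasDerivAt_bernoulliTransform (A := A) (p := p) (hy s hs).hasDerivAt (hpos s hs)
  have hslope (s : ℝ) (hs : s ∈ interior (Ici (0 : ℝ))) :
      p * B ≤ deriv (bernoulliTransform A p y) s := by
    have hs : s ∈ Ici (0 : ℝ) := interior_subset hs
    have hexp : 1 ≤ exp (p * A * s) := one_le_exp (by have := mem_Ici.1 hs; positivity)
    calc p * B ≤ p * B * exp (p * A * s) := le_mul_of_one_le_right (by positivity) hexp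
      _ ≤ _ := mul_exp_le_deriv_bernoulliTransform hp (hy s hs) (hpos s hs) (hode s hs)
  simpa using (convex_Ici (0 : ℝ)).mul_sub_le_image_sub_of_le_deriv
    (fun s hs => (hderiv s hs).continuousAt.continuousWithinAt)
    (fun s hs => (hderiv s (interior_subset hs)).differentiableAt.differentiableWithinAt)
    hslope 0 self_mem_Ici t ht ht

lemma le_exp_mul_rpow_of_le_bernoulliTransform {A p a t : ℝ} {y : ℝ → ℝ} (hp : 0 < p)
    (ha : 0 < a) (hpos : 0 < y t) (h : a ≤ bernoulliTransform A p y t) :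
    y t ≤ exp (A * t) * a ^ (-1 / p) := by
  have hscaled : bernoulliTransform A p y t = (y t * exp (-(A * t))) ^ (-p) := by
    rw [bernoulliTransform, mul_rpow hpos.le (exp_pos _).le, ← exp_mul]
    ring_nf
  rw [hscaled, ← le_rpow_inv_iff_of_neg (by positivity) ha (neg_lt_zero.2 hp)] at h
  rw [show -1 / p = (-p)⁻¹ by field_simp, ← div_le_iff₀' (exp_pos _), div_eq_mul_inv,
    ← exp_neg]
  exact h

/-- Nash-iteration ODE step in the heat-kernel bound (Theorem C.1): if `y > 0` on `[0,∞)`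
satisfies `y' ≤ A y - B y^{1+p}`, then `y(t) ≤ e^{At} (pBt)^{-1/p}` for all `t > 0`. -/
theorem nash_ode_bound
    (A B p : ℝ) (hA : 0 < A) (hB : 0 < B) (hp : 0 < p)
    (y : ℝ → ℝ)
    (hy : ∀ t ∈ Set.Ici (0 : ℝ), DifferentiableAt ℝ y t)
    (hypos : ∀ t ∈ Set.Ici (0 : ℝ), 0 < y t)
    (hode : ∀ t ∈ Set.Ici (0 : ℝ), deriv y t ≤ A * y t - B * (y t) ^ (1 + p)) :
    ∀ t : ℝ, 0 < t → y t ≤ Real.exp (A * t) * (p * B * t) ^ (-1 / p) := by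
  intro t ht
  have hgrowth := mul_le_bernoulliTransform_sub hA.le hB.le hp.le hy hypos hode ht.le
  have hinit : 0 < bernoulliTransform A p y 0 :=
    mul_pos (rpow_pos_of_pos (hypos 0 self_mem_Ici) _) (exp_pos _)
  exact le_exp_mul_rpow_of_le_bernoulliTransform hp (by positivity) (hypos t ht.le)
    (by linarith)
end
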